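/- arXiv:2305.19410 — 2 statements merged into one kernel-verified Lean document; each statement's English description precedes it below -/
import Mathlib

section
/- Let N' be obtained from a network N by an E1 operation: adding a new reaction C -> D involving only species of N such that rk(N') = rk(N). If some linkage class of N contains both C and D, then delta(N') = delta(N); otherwise delta(N') = delta(N) + 1. -/
/-!
Since the rank does not change, only `c - ℓ` matters. Count it on the complexes of `N'`, viewing a
new complex as a singleton linkage class of `N`: this does not change `c - ℓ` for `N`. If `C` and
`D` are already linked, the new reaction leaves every linkage class as it was; otherwise it merges
the classes of `C` and `D` into one, so `ℓ` drops by one.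
-/

open Submodule

/-- A complex on `s` species: a vector of nonnegative integers. -/
abbrev Cplx (s : ℕ) := Fin s → ℕ

/-- The real vector associated to a complex. -/
def toR {s : ℕ} (C : Cplx s) : Fin s → ℝ := fun i => (C i : ℝ)

/-- A chemical reaction network on `s` species, given by its set of reactions
(ordered pairs of distinct complexes). -/
structure Network (s : ℕ) where
  reactions : Finset (Cplx s × Cplx s)
  ne : ∀ r ∈ reactions, r.1 ≠ r.2

namespace Network

variable {s : ℕ}

/-- The complexes of a network: all sources and targets of reactions. -/
def complexes (N : Network s) : Finset (Cplx s) :=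
  N.reactions.image Prod.fst ∪ N.reactions.image Prod.snd

/-- One (undirected) step in the reaction graph. -/
def step (N : Network s) (C D : Cplx s) : Prop :=
  (C, D) ∈ N.reactions ∨ (D, C) ∈ N.reactions

/-- Being connected by a path in the undirected reaction graph. -/
def linked (N : Network s) : Cplx s → Cplx s → Prop :=
  Relation.ReflTransGen N.step

/-- `C` and `D` are complexes of `N` lying in a common linkage class. -/
def sameLinkageClass (N : Network s) (C D : Cplx s) : Prop :=
  C ∈ N.complexes ∧ D ∈ N.complexes ∧ N.linked C D

/-- The linkage class of a complex `C`. -/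
def linkageClass (N : Network s) (C : Cplx s) : Set (Cplx s) :=
  {D | N.linked C D}

/-- The number of complexes `c_N`. -/
def numComplexes (N : Network s) : ℕ := N.complexes.card

/-- The number of linkage classes `ℓ_N`. -/
noncomputable def numLinkage (N : Network s) : ℕ :=
  Set.ncard {S : Set (Cplx s) | ∃ C ∈ N.complexes, S = N.linkageClass C}

/-- The number of reactions `r_N`. -/
def numReactions (N : Network s) : ℕ := N.reactions.card

/-- The stoichiometric subspace: the real span of all reaction vectors. -/
def stoichSubspace (N : Network s) : Submodule ℝ (Fin s → ℝ) :=
  Submodule.span ℝ {v | ∃ r ∈ N.reactions, v = toR r.2 - toR r.1}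

/-- The rank of the network. -/
noncomputable def rank (N : Network s) : ℕ :=
  Module.finrank ℝ N.stoichSubspace

/-- The deficiency `δ(N) = c_N - ℓ_N - rk(N)`. -/
noncomputable def deficiency (N : Network s) : ℤ :=
  (N.numComplexes : ℤ) - N.numLinkage - N.rank

/-- The cyclomatic number `cyc(N) = r_N - c_N + ℓ_N`. -/
noncomputable def cyc (N : Network s) : ℤ :=
  (N.numReactions : ℤ) - N.numComplexes + N.numLinkage

end Network

namespace Network

variable {s : ℕ} {N N' : Network s} {C D X Y : Cplx s}

instance : Std.Symm N.step := ⟨fun _ _ => Or.symm⟩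

theorem linked_symm (h : N.linked X Y) : N.linked Y X :=
  Std.Symm.symm (r := Relation.ReflTransGen N.step) _ _ h

theorem mem_complexes_of_linked (h : N.linked X Y) (hne : X ≠ Y) : Y ∈ N.complexes := by
  rcases h.cases_tail with rfl | ⟨Z, -, hZY | hYZ⟩
  · exact absurd rfl hne
  · exact Finset.mem_union_right _ (Finset.mem_image_of_mem Prod.snd hZY)
  · exact Finset.mem_union_left _ (Finset.mem_image_of_mem Prod.fst hYZ)

theorem linkageClass_eq_iff : N.linkageClass X = N.linkageClass Y ↔ N.linked X Y := by
  refine ⟨fun h => ?_, fun h => Set.ext fun Z => ⟨(linked_symm h).trans, h.trans⟩⟩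
  have hY : Y ∈ N.linkageClass Y := Relation.ReflTransGen.refl
  rwa [← h] at hY

theorem numLinkage_eq_ncard_image (N : Network s) :
    N.numLinkage = (N.linkageClass '' N.complexes).ncard := by
  simp only [numLinkage, Set.image, Finset.mem_coe, eq_comm]

theorem complexes_of_insert_reaction (h : N'.reactions = insert (C, D) N.reactions) :
    N'.complexes = insert C (insert D N.complexes) := by
  simp only [complexes, h, Finset.image_insert, Finset.insert_union, Finset.union_insert]
  exact Finset.insert_comm _ _ _

theorem linked_of_insert_reaction (h : N'.reactions = insert (C, D) N.reactions)
    (hXY : N.linked X Y) : N'.linked X Y :=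
  Relation.ReflTransGen.mono (fun _ _ => Or.imp (fun hr => h ▸ Finset.mem_insert_of_mem hr)
    (fun hr => h ▸ Finset.mem_insert_of_mem hr)) _ _ hXY

theorem linked_new_of_insert_reaction (h : N'.reactions = insert (C, D) N.reactions) :
    N'.linked C D :=
  .single (.inl (h ▸ Finset.mem_insert_self _ _))

theorem step_of_insert_reaction (h : N'.reactions = insert (C, D) N.reactions)
    (hXY : N'.step X Y) : N.step X Y ∨ X = C ∧ Y = D ∨ X = D ∧ Y = C := by
  simp only [step, h, Finset.mem_insert, Prod.mk.injEq] at hXY ⊢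
  tauto

theorem linked_cases_of_insert_reaction (h : N'.reactions = insert (C, D) N.reactions)
    (hXY : N'.linked X Y) :
    N.linked X Y ∨ N.linked X C ∧ N.linked D Y ∨ N.linked X D ∧ N.linked C Y := by
  induction hXY with
  | refl => exact .inl .refl
  | tail _ hZW ih =>
    rcases step_of_insert_reaction h hZW with hZW | ⟨rfl, rfl⟩ | ⟨rfl, rfl⟩
    · exact ih.imp (·.tail hZW) (Or.imp (And.imp_right (·.tail hZW)) (And.imp_right (·.tail hZW)))
    · rcases ih with ih | ⟨ih, -⟩ | ⟨ih, -⟩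
      exacts [.inr (.inl ⟨ih, .refl⟩), .inr (.inl ⟨ih, .refl⟩), .inl ih]
    · rcases ih with ih | ⟨ih, -⟩ | ⟨ih, -⟩
      exacts [.inr (.inr ⟨ih, .refl⟩), .inl ih, .inr (.inr ⟨ih, .refl⟩)]

theorem linkageClass_of_insert_reaction_of_linked
    (h : N'.reactions = insert (C, D) N.reactions) (hCD : N.linked C D) :
    N'.linkageClass = N.linkageClass := by
  funext X
  ext Y
  refine ⟨fun hXY => ?_, linked_of_insert_reaction h⟩
  rcases linked_cases_of_insert_reaction h hXY with hXY | ⟨hXC, hDY⟩ | ⟨hXD, hCY⟩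
  exacts [hXY, (hXC.trans hCD).trans hDY, (hXD.trans (linked_symm hCD)).trans hCY]

/-- For `S = N.complexes` this is `c_N - ℓ_N`, the number of edges of a spanning forest of
the reaction graph. -/
noncomputable def forestRank (N : Network s) (S : Finset (Cplx s)) : ℤ :=
  S.card - (N.linkageClass '' S).ncard

theorem deficiency_eq_forestRank_sub_rank (N : Network s) :
    N.deficiency = N.forestRank N.complexes - N.rank := by
  rw [deficiency, forestRank, numLinkage_eq_ncard_image, numComplexes]

theorem forestRank_insert_of_complexes_subset {S : Finset (Cplx s)} (hS : N.complexes ⊆ S)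
    (X : Cplx s) : N.forestRank (insert X S) = N.forestRank S := by
  by_cases hX : X ∈ S
  · rw [Finset.insert_eq_of_mem hX]
  have hclass : N.linkageClass X ∉ N.linkageClass '' S := by
    rintro ⟨Y, hY, hYX⟩
    have hYX' : Y ≠ X := fun hYX' => hX (hYX' ▸ hY)
    exact hX (hS (mem_complexes_of_linked (linkageClass_eq_iff.mp hYX) hYX'))
  rw [forestRank, forestRank, Finset.coe_insert, Set.image_insert_eq,
    Set.ncard_insert_of_notMem hclass (S.finite_toSet.image _), Finset.card_insert_of_notMem hX]
  push_cast
  ring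

/-- Distinct linkage classes are disjoint, so intersecting with `S` is injective on the classes
meeting `S`. -/
theorem ncard_image_linkageClass_eq_ncard_image_inter (N : Network s) (S : Set (Cplx s)) :
    (N.linkageClass '' S).ncard = ((fun X => N.linkageClass X ∩ S) '' S).ncard := by
  rw [← Set.image_image (· ∩ S)]
  refine (Set.InjOn.ncard_image ?_).symm
  rintro _ ⟨X, -, rfl⟩ _ ⟨Y, hY, rfl⟩ hXY
  exact linkageClass_eq_iff.mpr ((Set.ext_iff.mp hXY Y).mpr ⟨Relation.ReflTransGen.refl, hY⟩).1

theorem ncard_image_linkageClass_congr {M : Network s} {S : Set (Cplx s)}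
    (hNM : ∀ X ∈ S, ∀ Y ∈ S, N.linked X Y ↔ M.linked X Y) :
    (N.linkageClass '' S).ncard = (M.linkageClass '' S).ncard := by
  rw [ncard_image_linkageClass_eq_ncard_image_inter, ncard_image_linkageClass_eq_ncard_image_inter,
    Set.image_congr]
  exact fun X hX => Set.ext fun Y => and_congr_left fun hY => hNM X hX Y hY

theorem ncard_image_linkageClass_diff_add_one {S : Set (Cplx s)} (hS : S.Finite) (hD : D ∈ S) :
    (N.linkageClass '' (S \ N.linkageClass D)).ncard + 1 = (N.linkageClass '' S).ncard := by
  have hsplit : N.linkageClass '' S =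
      insert (N.linkageClass D) (N.linkageClass '' (S \ N.linkageClass D)) := by
    refine Set.Subset.antisymm ?_ (Set.insert_subset (Set.mem_image_of_mem _ hD)
      (Set.image_mono Set.sdiff_subset))
    rintro _ ⟨X, hX, rfl⟩
    by_cases hDX : N.linked D X
    · exact .inl (linkageClass_eq_iff.mpr (linked_symm hDX))
    · exact .inr ⟨X, ⟨hX, hDX⟩, rfl⟩
  have hnew : N.linkageClass D ∉ N.linkageClass '' (S \ N.linkageClass D) := by
    rintro ⟨X, ⟨-, hDX⟩, hXD⟩
    exact hDX (linkageClass_eq_iff.mp hXD.symm)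
  rw [hsplit, Set.ncard_insert_of_notMem hnew (hS.sdiff.image _)]

/-- The new reaction merges the classes of `C` and `D`; removing the class of `D` from `S`
leaves a set on which `N` and `N'` induce the same linkage. -/
theorem forestRank_of_insert_reaction_of_not_linked
    (h : N'.reactions = insert (C, D) N.reactions) (hCD : ¬ N.linked C D)
    {S : Finset (Cplx s)} (hC : C ∈ S) (hD : D ∈ S) :
    N'.forestRank S = N.forestRank S + 1 := by
  set S' := (S : Set (Cplx s)) \ N.linkageClass D
  have hC' : C ∈ S' := ⟨hC, fun hDC => hCD (linked_symm hDC)⟩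
  have hN' : N'.linkageClass '' S = N'.linkageClass '' S' := by
    refine Set.Subset.antisymm ?_ (Set.image_mono Set.sdiff_subset)
    rintro _ ⟨X, hX, rfl⟩
    by_cases hDX : N.linked D X
    · refine ⟨C, hC', linkageClass_eq_iff.mpr ?_⟩
      exact (linked_new_of_insert_reaction h).trans (linked_of_insert_reaction h hDX)
    · exact ⟨X, ⟨hX, hDX⟩, rfl⟩
  have hlinked : ∀ X ∈ S', ∀ Y ∈ S', N'.linked X Y ↔ N.linked X Y := by
    rintro X ⟨-, hDX⟩ Y ⟨-, hDY⟩
    refine ⟨fun hXY => ?_, linked_of_insert_reaction h⟩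
    rcases linked_cases_of_insert_reaction h hXY with hXY | ⟨-, hDY'⟩ | ⟨hXD, -⟩
    exacts [hXY, absurd hDY' hDY, absurd (linked_symm hXD) hDX]
  have hcount := ncard_image_linkageClass_diff_add_one (N := N) S.finite_toSet hD
  rw [forestRank, forestRank, hN', ncard_image_linkageClass_congr hlinked, ← hcount]
  push_cast
  ring

end Network

theorem stmt5_general {s : ℕ} (N N' : Network s) (C D : Cplx s) (hCD : C ≠ D)
    (h : N'.reactions = insert (C, D) N.reactions)
    (hrk : N'.rank = N.rank) :
    (N.sameLinkageClass C D → N'.deficiency = N.deficiency) ∧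
    (¬ N.sameLinkageClass C D → N'.deficiency = N.deficiency + 1) := by
  have hV := Network.complexes_of_insert_reaction h
  have hextend : N.forestRank N'.complexes = N.forestRank N.complexes := by
    rw [hV, Network.forestRank_insert_of_complexes_subset (Finset.subset_insert _ _),
      Network.forestRank_insert_of_complexes_subset subset_rfl]
  rw [Network.deficiency_eq_forestRank_sub_rank, Network.deficiency_eq_forestRank_sub_rank, hrk,
    ← hextend]
  refine ⟨fun ⟨_, _, hlinked⟩ => ?_, fun hnotsame => ?_⟩
  · rw [Network.forestRank, Network.forestRank,
      Network.linkageClass_of_insert_reaction_of_linked h hlinked]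
  · have hnotlinked : ¬ N.linked C D := fun hl =>
      hnotsame ⟨Network.mem_complexes_of_linked (Network.linked_symm hl) hCD.symm,
        Network.mem_complexes_of_linked hl hCD, hl⟩
    rw [Network.forestRank_of_insert_reaction_of_not_linked h hnotlinked
      (hV ▸ Finset.mem_insert_self _ _)
      (hV ▸ Finset.mem_insert_of_mem (Finset.mem_insert_self _ _))]
    ring

theorem stmt5 {s : ℕ} (N N' : Network s) (C D : Cplx s) (hCD : C ≠ D)
    (hnew : (C, D) ∉ N.reactions)
    (h : N'.reactions = insert (C, D) N.reactions)
    (hrk : N'.rank = N.rank) :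
    (N.sameLinkageClass C D → N'.deficiency = N.deficiency) ∧
    (¬ N.sameLinkageClass C D → N'.deficiency = N.deficiency + 1) :=
  stmt5_general N N' C D hCD h hrk
end

section
/- Let N' be obtained from a network N by an E3 operation (adding a new species Y into some existing reactions, preserving the number of reactions; the rank condition is not needed). Then ell_{N'} - ell_N <= c_{N'} - c_N, i.e., the increase in the number of linkage classes is at most the increase in the number of complexes. -/
open Submodule

/-- Delete the coordinate of the new species `Y` (the last species). -/
def proj {s : ℕ} (C : Cplx (s + 1)) : Cplx s := fun i => C i.castSucc

/-! `c - ℓ` is the number of edges of a spanning forest of the reaction graph. Adding a reaction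
`a → b` raises it by one, unless `a` and `b` were already linked, in which case it stays the same.
Build `N'` one reaction at a time, together with its projection `N`: whenever the new reaction of
`N'` joins complexes that are already linked, so does its image, hence at every step `c - ℓ`
grows at least as much for `N'` as for `N`. -/

theorem Finset.card_image_add_one_of_eq_of_injOn_erase {α β : Type*} [DecidableEq α]
    [DecidableEq β] {T : Finset α} {f : α → β} {p q : α} (hp : p ∈ T) (hq : q ∈ T) (hpq : p ≠ q)
    (hf : f p = f q) (hinj : Set.InjOn f (T.erase q)) : (T.image f).card + 1 = T.card := by
  have himage : T.image f = (T.erase q).image f := by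
    refine subset_antisymm (fun y hy => ?_) (Finset.image_subset_image (T.erase_subset q))
    obtain ⟨x, hx, rfl⟩ := Finset.mem_image.mp hy
    by_cases hxq : x = q
    · exact Finset.mem_image.mpr ⟨p, Finset.mem_erase.mpr ⟨hpq, hp⟩, hxq ▸ hf⟩
    · exact Finset.mem_image_of_mem f (Finset.mem_erase.mpr ⟨hxq, hx⟩)
  rw [himage, Finset.card_image_of_injOn hinj, Finset.card_erase_add_one hq]

namespace Network

variable {s t : ℕ}

theorem linked_symm_s8 (N : Network s) {C D : Cplx s} (h : N.linked C D) : N.linked D C := by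
  induction h with
  | refl => exact .refl
  | tail _ hstep ih => exact .head hstep.symm ih

theorem linked_congr_left (N : Network s) {C D : Cplx s} (h : N.linked C D) (E : Cplx s) :
    N.linked C E ↔ N.linked D E :=
  ⟨(N.linked_symm_s8 h).trans, h.trans⟩

theorem mem_linkageClass_self (N : Network s) (C : Cplx s) : C ∈ N.linkageClass C :=
  Relation.ReflTransGen.refl

theorem linkageClass_eq_iff_s8 (N : Network s) {C D : Cplx s} :
    N.linkageClass C = N.linkageClass D ↔ N.linked C D := by
  refine ⟨fun h => (h ▸ N.mem_linkageClass_self D : D ∈ N.linkageClass C), fun h => ?_⟩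
  ext E
  exact ⟨(N.linked_symm_s8 h).trans, h.trans⟩

theorem linked_iff_eq_of_notMem {N : Network s} {C D : Cplx s} (hC : C ∉ N.complexes) :
    N.linked C D ↔ C = D := by
  refine ⟨fun h => ?_, fun h => h ▸ .refl⟩
  rcases h.cases_head with h | ⟨E, hCE | hEC, _⟩
  · exact h
  · exact absurd (Finset.mem_union_left _ (Finset.mem_image_of_mem Prod.fst hCE)) hC
  · exact absurd (Finset.mem_union_right _ (Finset.mem_image_of_mem Prod.snd hEC)) hC

theorem numLinkage_eq_card_image (N : Network s) :
    N.numLinkage = (N.complexes.image N.linkageClass).card := by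
  rw [numLinkage, ← Set.ncard_coe_finset]
  congr 1
  ext S
  simp [eq_comm]

/-- Complexes outside `N` form singleton linkage classes. -/
theorem card_image_linkageClass_of_subset (N : Network s)
    {W : Finset (Cplx s)} (hW : N.complexes ⊆ W) :
    (W.image N.linkageClass).card = N.numLinkage + (W \ N.complexes).card := by
  have hdisj : Disjoint (N.complexes.image N.linkageClass)
      ((W \ N.complexes).image N.linkageClass) := by
    refine Finset.disjoint_left.mpr fun S hS hS' => ?_
    obtain ⟨C, hC, rfl⟩ := Finset.mem_image.mp hS
    obtain ⟨D, hD, hDC⟩ := Finset.mem_image.mp hS'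
    have hDnot := (Finset.mem_sdiff.mp hD).2
    have := (linked_iff_eq_of_notMem hDnot).mp ((N.linkageClass_eq_iff_s8).mp hDC)
    exact hDnot (this ▸ hC)
  have hinj : Set.InjOn N.linkageClass ↑(W \ N.complexes) := fun C hC D _ hCD =>
    (linked_iff_eq_of_notMem (Finset.mem_sdiff.mp hC).2).mp ((N.linkageClass_eq_iff_s8).mp hCD)
  conv_lhs => rw [← Finset.union_sdiff_of_subset hW]
  rw [Finset.image_union, Finset.card_union_of_disjoint hdisj,
    Finset.card_image_of_injOn hinj, numLinkage_eq_card_image]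

section InsertReaction

variable {N₁ N₂ : Network s} {a b : Cplx s}

theorem complexes_eq_insert_of_reactions_eq_insert
    (h : N₂.reactions = insert (a, b) N₁.reactions) :
    N₂.complexes = insert a (insert b N₁.complexes) := by
  ext C
  simp only [complexes, h, Finset.image_insert, Finset.mem_union, Finset.mem_insert]
  tauto

theorem linked_iff_of_reactions_eq_insert (h : N₂.reactions = insert (a, b) N₁.reactions)
    {C D : Cplx s} :
    N₂.linked C D ↔ N₁.linked C D ∨ (N₁.linked C a ∧ N₁.linked b D) ∨
      (N₁.linked C b ∧ N₁.linked a D) := by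
  have hstep : ∀ {E F}, N₂.step E F ↔ N₁.step E F ∨ (E = a ∧ F = b) ∨ (E = b ∧ F = a) := by
    intro E F
    simp only [step, h, Finset.mem_insert, Prod.mk.injEq]
    tauto
  have hab : N₂.linked a b := .single (hstep.mpr (.inr (.inl ⟨rfl, rfl⟩)))
  have hmono : ∀ {E F}, N₁.linked E F → N₂.linked E F :=
    Relation.ReflTransGen.mono (fun _ _ h => hstep.mpr (.inl h)) _ _
  constructor
  · intro hCD
    induction hCD with
    | refl => exact .inl .refl
    | tail _ hEF ih =>
      rcases hstep.mp hEF with hEF | ⟨rfl, rfl⟩ | ⟨rfl, rfl⟩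
      · have hEF : N₁.linked _ _ := .single hEF
        rcases ih with h | ⟨h₁, h₂⟩ | ⟨h₁, h₂⟩
        · exact .inl (h.trans hEF)
        · exact .inr (.inl ⟨h₁, h₂.trans hEF⟩)
        · exact .inr (.inr ⟨h₁, h₂.trans hEF⟩)
      · rcases ih with h | ⟨h₁, -⟩ | ⟨h₁, -⟩
        · exact .inr (.inl ⟨h, .refl⟩)
        · exact .inr (.inl ⟨h₁, .refl⟩)
        · exact .inl h₁
      · rcases ih with h | ⟨h₁, -⟩ | ⟨h₁, -⟩
        · exact .inr (.inr ⟨h, .refl⟩)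
        · exact .inl h₁
        · exact .inr (.inr ⟨h₁, .refl⟩)
  · rintro (h | ⟨h₁, h₂⟩ | ⟨h₁, h₂⟩)
    · exact hmono h
    · exact (hmono h₁).trans (hab.trans (hmono h₂))
    · exact (hmono h₁).trans ((N₂.linked_symm_s8 hab).trans (hmono h₂))

/-- Adding the reaction `a → b` merges the linkage classes of `a` and `b` and leaves all other
classes alone. -/
theorem linkageClass_of_reactions_eq_insert (h : N₂.reactions = insert (a, b) N₁.reactions) :
    N₂.linkageClass = (fun S => if S = N₁.linkageClass a ∨ S = N₁.linkageClass b then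
      N₁.linkageClass a ∪ N₁.linkageClass b else S) ∘ N₁.linkageClass := by
  funext C
  ext D
  change N₂.linked C D ↔ _
  rw [linked_iff_of_reactions_eq_insert h, Function.comp_apply]
  split_ifs with hC <;> simp only [N₁.linkageClass_eq_iff_s8, not_or] at hC
  · change _ ↔ N₁.linked a D ∨ N₁.linked b D
    rcases hC with hCa | hCb
    · rw [N₁.linked_congr_left hCa]
      tauto
    · rw [N₁.linked_congr_left hCb]
      tauto
  · simp only [hC, false_and, or_false]
    rfl

theorem card_image_merge_add_one (N : Network s) {a b : Cplx s}
    (hab : ¬N.linked a b) {W : Finset (Cplx s)} (ha : a ∈ W) (hb : b ∈ W) :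
    ((W.image N.linkageClass).image fun S => if S = N.linkageClass a ∨ S = N.linkageClass b
      then N.linkageClass a ∪ N.linkageClass b else S).card + 1 =
      (W.image N.linkageClass).card := by
  set A := N.linkageClass a
  set B := N.linkageClass b
  set merge : Set (Cplx s) → Set (Cplx s) := fun S => if S = A ∨ S = B then A ∪ B else S
  set T := W.image N.linkageClass
  have hAB : A ≠ B := fun h => hab (N.linkageClass_eq_iff_s8.mp h)
  have hmergeA : merge A = A ∪ B := if_pos (.inl rfl)
  have hother : ∀ S ∈ T, S ≠ A → S ≠ B → merge S = S ∧ S ≠ A ∪ B := by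
    intro S hS hSA hSB
    obtain ⟨C, -, rfl⟩ := Finset.mem_image.mp hS
    refine ⟨if_neg (not_or.mpr ⟨hSA, hSB⟩), fun hS => hSA ?_⟩
    exact N.linkageClass_eq_iff_s8.mpr
      (show a ∈ N.linkageClass C from hS ▸ Or.inl (N.mem_linkageClass_self a))
  have hinj : Set.InjOn merge (T.erase B) := by
    intro S hS S' hS' hSS'
    obtain ⟨hSB, hS⟩ := Finset.mem_erase.mp hS
    obtain ⟨hS'B, hS'⟩ := Finset.mem_erase.mp hS'
    by_cases hSA : S = A <;> by_cases hS'A : S' = A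
    · rw [hSA, hS'A]
    · obtain ⟨hfix, hne⟩ := hother S' hS' hS'A hS'B
      rw [hSA, hmergeA, hfix] at hSS'
      exact absurd hSS'.symm hne
    · obtain ⟨hfix, hne⟩ := hother S hS hSA hSB
      rw [hS'A, hmergeA, hfix] at hSS'
      exact absurd hSS' hne
    · rwa [(hother S hS hSA hSB).1, (hother S' hS' hS'A hS'B).1] at hSS'
  exact Finset.card_image_add_one_of_eq_of_injOn_erase (Finset.mem_image_of_mem _ ha)
    (Finset.mem_image_of_mem _ hb) hAB (hmergeA.trans (if_pos (.inr rfl)).symm) hinj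

open Classical in
theorem numComplexes_sub_numLinkage_of_reactions_eq_insert
    (h : N₂.reactions = insert (a, b) N₁.reactions) :
    (N₂.numComplexes : ℤ) - N₂.numLinkage =
      N₁.numComplexes - N₁.numLinkage + if N₁.linked a b then 0 else 1 := by
  have hV := complexes_eq_insert_of_reactions_eq_insert h
  have hsub : N₁.complexes ⊆ N₂.complexes :=
    hV ▸ (Finset.subset_insert _ _).trans (Finset.subset_insert _ _)
  have hT : (N₂.complexes.image N₁.linkageClass).card =
      N₁.numLinkage + (N₂.complexes \ N₁.complexes).card :=
    N₁.card_image_linkageClass_of_subset hsub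
  have hc : N₂.numComplexes = N₁.numComplexes + (N₂.complexes \ N₁.complexes).card := by
    rw [numComplexes, numComplexes, ← Finset.card_sdiff_add_card_eq_card hsub, add_comm]
  rw [numLinkage_eq_card_image, linkageClass_of_reactions_eq_insert h, ← Finset.image_image, hc]
  split_ifs with hab
  · have hmerge : N₁.linkageClass a = N₁.linkageClass b := N₁.linkageClass_eq_iff_s8.mpr hab
    have hid : ∀ S, (if S = N₁.linkageClass a then N₁.linkageClass a else S) = S :=
      fun S => ite_eq_right_iff.mpr fun hS => hS.symm
    simp only [← hmerge, or_self, Set.union_self, hid, Finset.image_id', hT]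
    push_cast
    ring
  · have := N₁.card_image_merge_add_one hab (W := N₂.complexes) (by simp [hV]) (by simp [hV])
    push_cast
    omega

end InsertReaction

theorem complexes_eq_empty {N : Network s} (h : N.reactions = ∅) : N.complexes = ∅ := by
  simp [complexes, h]

theorem linked_map {N : Network s} {N' : Network t} {f : Cplx t → Cplx s}
    (hf : N'.reactions.image (Prod.map f f) ⊆ N.reactions) {C D : Cplx t}
    (h : N'.linked C D) : N.linked (f C) (f D) :=
  Relation.ReflTransGen.lift f (fun _ _ hstep =>
    hstep.imp (fun h => hf (Finset.mem_image_of_mem _ h))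
      (fun h => hf (Finset.mem_image_of_mem _ h))) _ _ h

theorem numComplexes_sub_numLinkage_le_of_reactions_eq_image (f : Cplx t → Cplx s)
    {N : Network s} {N' : Network t} (h : N.reactions = N'.reactions.image (Prod.map f f)) :
    (N.numComplexes : ℤ) - N.numLinkage ≤ N'.numComplexes - N'.numLinkage := by
  obtain ⟨R, hR⟩ : ∃ R, N'.reactions = R := ⟨_, rfl⟩
  induction R using Finset.induction_on generalizing N N' with
  | empty =>
    have hN : N.complexes = ∅ := complexes_eq_empty (by simp [h, hR])
    simp [numComplexes, numLinkage_eq_card_image, hN, complexes_eq_empty hR]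
  | insert r R _ ih =>
    obtain ⟨a, b⟩ := r
    let M' : Network t := ⟨R, fun q hq => N'.ne q (hR ▸ Finset.mem_insert_of_mem hq)⟩
    let M : Network s := ⟨R.image (Prod.map f f), fun q hq =>
      N.ne q (h ▸ hR ▸ Finset.image_subset_image (Finset.subset_insert _ _) hq)⟩
    have hM := ih (N := M) (N' := M') rfl rfl
    have hN' := numComplexes_sub_numLinkage_of_reactions_eq_insert (N₁ := M') hR
    have hN := numComplexes_sub_numLinkage_of_reactions_eq_insert (N₁ := M) (a := f a) (b := f b)
      (by rw [h, hR, Finset.image_insert]; rfl)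
    have hlink : M'.linked a b → M.linked (f a) (f b) := linked_map subset_rfl
    split_ifs at hN hN' <;> first | omega | exact absurd (hlink ‹_›) ‹_›

end Network

theorem stmt8_general {s : ℕ} (N : Network s) (N' : Network (s + 1))
    (hproj : N.reactions = N'.reactions.image fun r => (proj r.1, proj r.2)) :
    (N'.numLinkage : ℤ) - N.numLinkage ≤ (N'.numComplexes : ℤ) - N.numComplexes := by
  have := Network.numComplexes_sub_numLinkage_le_of_reactions_eq_image proj hproj
  omega

theorem stmt8 {s : ℕ} (N : Network s) (N' : Network (s + 1))
    (hproj : N.reactions = N'.reactions.image fun r => (proj r.1, proj r.2))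
    (hcard : N'.reactions.card = N.reactions.card) :
    (N'.numLinkage : ℤ) - N.numLinkage ≤ (N'.numComplexes : ℤ) - N.numComplexes :=
  stmt8_general N N' hproj
end
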